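/- arXiv:1405.7950 — 9 statements merged into one kernel-verified Lean document; each statement's English description precedes it below -/
import Mathlib

section
/- Let b be a non-degenerate symmetric bilinear form on a finite abelian p-group G with values in ℚ/ℤ. Then for every g ∈ G, the order of g equals the maximum over h ∈ G of the order of b(g,h) in ℚ/ℤ. -/
open Classical

/-!
Since `b` is symmetric and additive, `b g h` is killed by the order of `g`, so every
`addOrderOf (b g h)` divides `addOrderOf g`. Conversely, if `addOrderOf g = p ^ (m + 1)`, then
`p ^ m • g ≠ 0`, and non-degeneracy gives `h` with `p ^ m • b g h = b (p ^ m • g) h ≠ 0`, so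
`b g h` has order exactly `p ^ (m + 1)`.
-/

section SymmetricBiadditive

variable {G A : Type*} [AddCommMonoid G] [AddCommGroup A] {b : G → G → A}

theorem map_nsmul_left_of_symm (hsymm : ∀ g h : G, b g h = b h g)
    (hadd : ∀ g h h' : G, b g (h + h') = b g h + b g h') (n : ℕ) (g h : G) :
    b (n • g) h = n • b g h := by
  rw [hsymm, hsymm g, ← AddMonoidHom.mk'_apply (b h) (hadd h), map_nsmul]

theorem addOrderOf_dvd_addOrderOf_left_of_symm (hsymm : ∀ g h : G, b g h = b h g)
    (hadd : ∀ g h h' : G, b g (h + h') = b g h + b g h') (g h : G) :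
    addOrderOf (b g h) ∣ addOrderOf g := by
  rw [hsymm]
  exact addOrderOf_map_dvd (AddMonoidHom.mk' (b h) (hadd h)) g

theorem exists_addOrderOf_eq_addOrderOf_left {p : ℕ} (hp : p.Prime)
    (hsymm : ∀ g h : G, b g h = b h g)
    (hadd : ∀ g h h' : G, b g (h + h') = b g h + b g h')
    (hnd : ∀ g : G, (∀ h : G, b g h = 0) → g = 0)
    {g : G} (hg : ∃ n : ℕ, p ^ n • g = 0) :
    ∃ h : G, addOrderOf (b g h) = addOrderOf g := by
  have := Fact.mk hp
  obtain ⟨k, hk⟩ := exists_addOrderOf_eq_prime_pow_iff.mpr hg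
  rcases k with _ | m
  · have hg0 : g = 0 := AddMonoid.addOrderOf_eq_one_iff.mp (by simpa using hk)
    have hb0 : b 0 0 = 0 := by simpa using map_nsmul_left_of_symm hsymm hadd 0 0 0
    exact ⟨0, by rw [hg0, hb0, addOrderOf_zero, addOrderOf_zero]⟩
  · have hpm : p ^ m • g ≠ 0 :=
      nsmul_ne_zero_of_lt_addOrderOf (pow_ne_zero m hp.ne_zero)
        (hk ▸ Nat.pow_lt_pow_right hp.one_lt m.lt_succ_self)
    obtain ⟨h, hh⟩ : ∃ h, b (p ^ m • g) h ≠ 0 := by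
      by_contra! hall
      exact hpm (hnd _ hall)
    refine ⟨h, hk ▸ addOrderOf_eq_prime_pow ?_ ?_⟩
    · rwa [← map_nsmul_left_of_symm hsymm hadd]
    · rw [← hk]
      exact addOrderOf_dvd_iff_nsmul_eq_zero.mp
        (addOrderOf_dvd_addOrderOf_left_of_symm hsymm hadd g h)

end SymmetricBiadditive

theorem stmt2 {G : Type*} [AddCommGroup G] [Fintype G] (p : ℕ) (hp : p.Prime)
    (hG : ∀ x : G, ∃ n : ℕ, p ^ n • x = 0)
    (b : G → G → AddCircle (1 : ℚ))
    (hsymm : ∀ g h : G, b g h = b h g)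
    (hadd : ∀ g h h' : G, b g (h + h') = b g h + b g h')
    (hnd : ∀ g : G, (∀ h : G, b g h = 0) → g = 0)
    (g : G) :
    addOrderOf g = Finset.univ.sup (fun h : G => addOrderOf (b g h)) := by
  obtain ⟨h, hh⟩ := exists_addOrderOf_eq_addOrderOf_left hp hsymm hadd hnd (hG g)
  refine le_antisymm ?_ (Finset.sup_le fun h' _ => ?_)
  · exact hh.symm.le.trans (Finset.le_sup (f := fun h => addOrderOf (b g h)) (Finset.mem_univ h))
  · exact Nat.le_of_dvd (addOrderOf_pos g)
      (addOrderOf_dvd_addOrderOf_left_of_symm hsymm hadd g h')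
end

section
/- Let G be a finite abelian group and q a non-degenerate quadratic form on G with values in ℚ/ℤ. Then the Gauss sum Θ(G,q) = |G|^{-1/2} ∑_{x ∈ G} e^{2πi q(x)} has absolute value 1. -/
/-!
Writing `e r = exp (2πi r)` and `S = ∑ₓ e (q x)`, substitute `x = z + y` in
`|S|² = ∑_{x,y} e (q x - q y)`: since `q (z + y) - q y = q z + ∂q(z, y)`, this is
`∑_z e (q z) ∑_y e (∂q(z, y))`. The inner sum is the sum of a character of `G`, which is
trivial only for `z = 0` by non-degeneracy, so `|S|² = |G|`.
-/

open Complex ComplexConjugate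

noncomputable def expTwoPiI : AddChar ℚ ℂ where
  toFun r := exp (2 * Real.pi * I * r)
  map_zero_eq_one' := by simp
  map_add_eq_mul' r s := by push_cast; rw [mul_add, exp_add]

lemma expTwoPiI_apply (r : ℚ) : expTwoPiI r = exp (2 * Real.pi * I * r) := rfl

lemma expTwoPiI_eq_one_iff {r : ℚ} : expTwoPiI r = 1 ↔ ∃ n : ℤ, r = n := by
  have h2πI : 2 * Real.pi * I ≠ 0 := by simp [Real.pi_ne_zero]
  rw [expTwoPiI_apply, exp_eq_one_iff]
  refine exists_congr fun n => ?_
  rw [mul_comm (n : ℂ), mul_right_inj' h2πI]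
  exact_mod_cast Iff.rfl

lemma conj_expTwoPiI (r : ℚ) : conj (expTwoPiI r) = expTwoPiI (-r) := by
  simp only [expTwoPiI_apply, ← exp_conj, map_mul, conj_ofReal, conj_I, map_ratCast, map_ofNat]
  push_cast
  ring_nf

section Polar

variable {G : Type*} [AddCommGroup G]

def polar (q : G → ℚ) (x y : G) : ℚ := q (x + y) - q x - q y

lemma polar_comm (q : G → ℚ) (x y : G) : polar q x y = polar q y x := by
  rw [polar, polar, add_comm x]; ring

def PolarAddModInt (q : G → ℚ) : Prop :=
  ∀ x y z : G, ∃ n : ℤ, polar q (x + z) y = polar q x y + polar q z y + n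

def PolarNondegModInt (q : G → ℚ) : Prop :=
  ∀ x : G, (∀ y : G, ∃ n : ℤ, polar q x y = n) → x = 0

variable {q : G → ℚ}

lemma exists_intCast_eq_apply_zero (hq : PolarAddModInt q) :
    ∃ n : ℤ, q 0 = n := by
  obtain ⟨n, hn⟩ := hq 0 0 0
  simp only [polar, add_zero] at hn
  exact ⟨n, by linarith⟩

noncomputable def polarChar (hq : PolarAddModInt q) (x : G) : AddChar G ℂ where
  toFun y := expTwoPiI (polar q x y)
  map_zero_eq_one' := by
    obtain ⟨n, hn⟩ := exists_intCast_eq_apply_zero hq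
    exact expTwoPiI_eq_one_iff.2 ⟨-n, by simp [polar, hn]⟩
  map_add_eq_mul' y y' := by
    obtain ⟨n, hn⟩ := hq y x y'
    rw [← AddChar.map_add_eq_mul, polar_comm, hn, polar_comm q y, polar_comm q y',
      AddChar.map_add_eq_mul, expTwoPiI_eq_one_iff.2 ⟨n, rfl⟩, mul_one]

lemma polarChar_apply (hq : PolarAddModInt q) (x y : G) :
    polarChar hq x y = expTwoPiI (polar q x y) := rfl

lemma polarChar_eq_zero_iff (hq : PolarAddModInt q) (hnd : PolarNondegModInt q)
    {x : G} : polarChar hq x = 0 ↔ x = 0 := by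
  refine ⟨fun h => hnd x fun y => expTwoPiI_eq_one_iff.1 ?_, ?_⟩
  · exact DFunLike.congr_fun h y
  · rintro rfl
    ext y
    rw [polarChar_apply, polar_comm, ← polarChar_apply hq, AddChar.map_zero_eq_one]
    rfl

lemma sum_polarChar [Fintype G] [DecidableEq G] (hq : PolarAddModInt q)
    (hnd : PolarNondegModInt q) (x : G) :
    ∑ y, polarChar hq x y = if x = 0 then (Fintype.card G : ℂ) else 0 := by
  simp only [AddChar.sum_eq_ite, polarChar_eq_zero_iff hq hnd]

lemma sum_expTwoPiI_mul_conj [Fintype G] (hq : PolarAddModInt q) (hnd : PolarNondegModInt q) :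
    (∑ x, expTwoPiI (q x)) * conj (∑ x, expTwoPiI (q x)) = Fintype.card G := by
  classical
  obtain ⟨n, hn⟩ := exists_intCast_eq_apply_zero hq
  calc (∑ x, expTwoPiI (q x)) * conj (∑ y, expTwoPiI (q y))
      = ∑ y, ∑ x, expTwoPiI (q x) * expTwoPiI (-q y) := by
        simp only [map_sum, conj_expTwoPiI, Finset.sum_mul_sum]
        exact Finset.sum_comm
    _ = ∑ y, ∑ z, expTwoPiI (q z) * polarChar hq z y := by
        refine Finset.sum_congr rfl fun y _ => ?_
        refine Fintype.sum_equiv (Equiv.addRight y).symm _ _ fun x => ?_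
        rw [polarChar_apply, ← AddChar.map_add_eq_mul, ← AddChar.map_add_eq_mul]
        congr 1
        simp only [polar, Equiv.coe_addRight, Equiv.addRight_symm, neg_add_cancel_right]
        ring
    _ = ∑ z, expTwoPiI (q z) * ∑ y, polarChar hq z y := by
        rw [Finset.sum_comm]
        simp only [Finset.mul_sum]
    _ = Fintype.card G := by
        simp [sum_polarChar hq hnd, hn, expTwoPiI_eq_one_iff.2 ⟨n, rfl⟩]

lemma norm_sum_expTwoPiI [Fintype G] (hq : PolarAddModInt q) (hnd : PolarNondegModInt q) :
    ‖∑ x, expTwoPiI (q x)‖ = √(Fintype.card G) := by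
  rw [norm_def, ← ofReal_inj.1 ((mul_conj _).symm.trans (sum_expTwoPiI_mul_conj hq hnd))]

end Polar

theorem stmt5_general {G : Type*} [AddCommGroup G] [Fintype G]
    -- `q` is a rational-valued lift of a `ℚ/ℤ`-valued quadratic form:
    (q : G → ℚ)
    (hq_bilin : ∀ x y z : G, ∃ n : ℤ,
      (q (x + z + y) - q (x + z) - q y)
        = (q (x + y) - q x - q y) + (q (z + y) - q z - q y) + n)
    -- non-degeneracy of `∂q` (as a `ℚ/ℤ`-valued form):
    (hnd : ∀ x : G, (∀ y : G, ∃ n : ℤ, q (x + y) - q x - q y = n) → x = 0) :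
    ‖(Real.sqrt (Fintype.card G) : ℂ)⁻¹ *
      ∑ x : G, Complex.exp (2 * Real.pi * Complex.I * (q x : ℂ))‖ = 1 := by
  have hcard : Real.sqrt (Fintype.card G) ≠ 0 := by positivity
  rw [norm_mul, norm_inv, norm_real, Real.norm_of_nonneg (Real.sqrt_nonneg _)]
  exact (norm_sum_expTwoPiI hq_bilin hnd).symm ▸ inv_mul_cancel₀ hcard

theorem stmt5 {G : Type*} [AddCommGroup G] [Fintype G]
    -- `q` is a rational-valued lift of a `ℚ/ℤ`-valued quadratic form:
    (q : G → ℚ)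
    (hq_even : ∀ x : G, ∃ n : ℤ, q (-x) = q x + n)
    (hq_bilin : ∀ x y z : G, ∃ n : ℤ,
      (q (x + z + y) - q (x + z) - q y)
        = (q (x + y) - q x - q y) + (q (z + y) - q z - q y) + n)
    -- non-degeneracy of `∂q` (as a `ℚ/ℤ`-valued form):
    (hnd : ∀ x : G, (∀ y : G, ∃ n : ℤ, q (x + y) - q x - q y = n) → x = 0) :
    ‖(Real.sqrt (Fintype.card G) : ℂ)⁻¹ *
      ∑ x : G, Complex.exp (2 * Real.pi * Complex.I * (q x : ℂ))‖ = 1 :=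
  stmt5_general q hq_bilin hnd
end

section
/- Let α be an odd integer and r ≥ 1. Then the Gauss sum 2^{-r/2} ∑_{x=0}^{2^r - 1} e^{2πi α x² / 2^{r+1}} equals (-1)^{r(α²-1)/8} · e^{2πi α/8}. -/
/-!
Put `ζᵣ = e^{2πiα/2^{r+1}}`, so that the sum is `Gᵣ = ∑_{x < 2^r} ζᵣ^{x²}`. Split `G_{r+2}` by the
parity of `x`. Since `ζ_{r+2}⁴ = ζᵣ`, the even terms give `∑_{y < 2^{r+1}} ζᵣ^{y²}`, which is `2 Gᵣ`
because `y ↦ ζᵣ^{y²}` is `2^r`-periodic once `r ≥ 1`. The odd terms cancel in pairs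
`x, x + 2^{r+1}`, because `ζ_{r+2}^{2^{r+2} x} = (-1)^x`. Hence `G_{r+2} = 2 Gᵣ`, and it remains to
check `r = 1` and `r = 2`. For `r = 2` one has `G₂ = 1 + ζ + ζ⁴ + ζ⁹ = 2ζ` as `ζ⁴ = -1`; for `r = 1`
one needs `1 + ζ² = √2 (-1)^{(α²-1)/8} ζ` for the primitive eighth root `ζ = e^{2πiα/8}`, which is
checked on the residues of `α` mod 8.
-/

open Complex Finset Function
open scoped Real

lemma Finset.sum_range_two_mul {M : Type*} [AddCommMonoid M] (f : ℕ → M) (n : ℕ) :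
    ∑ i ∈ range (2 * n), f i = ∑ i ∈ range n, f (2 * i) + ∑ i ∈ range n, f (2 * i + 1) := by
  induction n with
  | zero => simp
  | succ n ih =>
    rw [Nat.mul_succ, sum_range_succ, sum_range_succ, ih, sum_range_succ, sum_range_succ,
      add_add_add_comm, add_assoc]

lemma Function.Periodic.sum_range_two_mul {M : Type*} [AddCommMonoid M] {f : ℕ → M} {n : ℕ}
    (hf : Periodic f n) : ∑ i ∈ range (2 * n), f i = 2 • ∑ i ∈ range n, f i := by
  rw [two_mul, sum_range_add, two_nsmul]
  exact congrArg _ (sum_congr rfl fun i _ ↦ by rw [add_comm, hf])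

lemma Function.Antiperiodic.sum_range_two_mul {M : Type*} [AddCommGroup M] {f : ℕ → M} {n : ℕ}
    (hf : Antiperiodic f n) : ∑ i ∈ range (2 * n), f i = 0 := by
  rw [two_mul, sum_range_add, ← sub_neg_eq_add, ← sum_neg_distrib, sub_eq_zero]
  exact sum_congr rfl fun i _ ↦ by rw [add_comm, hf, neg_neg]

section QuadGaussSum

variable {R : Type*} [CommRing R]

def quadGaussSum (ζ : R) (n : ℕ) : R :=
  ∑ x ∈ range n, ζ ^ x ^ 2

lemma quadGaussSum_two (ζ : R) : quadGaussSum ζ 2 = 1 + ζ := by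
  simp [quadGaussSum, sum_range_succ]

lemma quadGaussSum_four {ζ : R} (hζ : ζ ^ 4 = -1) : quadGaussSum ζ 4 = 2 * ζ := by
  simp only [quadGaussSum, sum_range_succ, range_zero, sum_empty]
  linear_combination (ζ ^ 5 - ζ + 1) * hζ

lemma pow_two_pow_eq_one_of_lt {ζ : R} {n m : ℕ} (hζ : ζ ^ 2 ^ n = -1) (hnm : n < m) :
    ζ ^ 2 ^ m = 1 := by
  obtain ⟨k, rfl⟩ := Nat.exists_eq_add_of_lt hnm
  rw [pow_succ, pow_add, pow_mul, pow_mul, hζ, ← pow_mul, mul_comm, pow_mul, neg_one_sq,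
    one_pow]

lemma quadGaussSum_two_pow_add_two {ζ : R} {r : ℕ} (hr : 1 ≤ r) (hζ : ζ ^ 2 ^ (r + 2) = -1) :
    quadGaussSum ζ (2 ^ (r + 2)) = 2 * quadGaussSum (ζ ^ 4) (2 ^ r) := by
  have h₁ : ζ ^ 2 ^ (r + 3) = 1 := pow_two_pow_eq_one_of_lt hζ (by omega)
  have h₂ : ζ ^ 2 ^ (2 * r + 2) = 1 := pow_two_pow_eq_one_of_lt hζ (by omega)
  have heven : Periodic (fun y : ℕ ↦ (ζ ^ 4) ^ y ^ 2) (2 ^ r) := fun y ↦ by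
    have hexp : 4 * (y + 2 ^ r) ^ 2 = 4 * y ^ 2 + 2 ^ (r + 3) * y + 2 ^ (2 * r + 2) := by ring
    dsimp only
    rw [← pow_mul, ← pow_mul, hexp, pow_add, pow_add, pow_mul _ (2 ^ (r + 3)), h₁, h₂,
      one_pow, mul_one, mul_one]
  have hodd : Antiperiodic (fun y : ℕ ↦ ζ ^ (2 * y + 1) ^ 2) (2 ^ r) := fun y ↦ by
    have hexp : (2 * (y + 2 ^ r) + 1) ^ 2
        = (2 * y + 1) ^ 2 + 2 ^ (r + 2) * (2 * y + 1) + 2 ^ (2 * r + 2) := by ring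
    dsimp only
    rw [hexp, pow_add, pow_add, pow_mul _ (2 ^ (r + 2)), hζ, h₂,
      (odd_two_mul_add_one y).neg_one_pow]
    ring
  have hsq (y : ℕ) : ζ ^ (2 * y) ^ 2 = (ζ ^ 4) ^ y ^ 2 := by ring
  rw [quadGaussSum, show 2 ^ (r + 2) = 2 * (2 * 2 ^ r) by ring, sum_range_two_mul,
    hodd.sum_range_two_mul, add_zero]
  simp only [hsq]
  rw [heven.sum_range_two_mul, two_nsmul, two_mul, quadGaussSum]

end QuadGaussSum

lemma Real.sqrt_pow {x : ℝ} (hx : 0 ≤ x) (n : ℕ) : √(x ^ n) = √x ^ n := by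
  rw [← Real.sqrt_sq (pow_nonneg (Real.sqrt_nonneg x) n), ← pow_mul, mul_comm, pow_mul,
    Real.sq_sqrt hx]

lemma Complex.exp_div_two_pow_pow (z : ℂ) {m n k : ℕ} (h : m + k = n) :
    exp (z / 2 ^ n) ^ 2 ^ m = exp (z / 2 ^ k) := by
  rw [← exp_nat_mul, ← h, pow_add]
  push_cast
  field_simp

lemma Complex.exp_two_pi_I_mul_odd_div_two {α : ℤ} (hα : Odd α) :
    exp (2 * π * I * α / 2) = -1 := by
  rw [show 2 * π * I * α / 2 = α * (π * I) by ring, exp_int_mul, exp_pi_mul_I, hα.neg_one_zpow]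

lemma neg_one_zpow_sq_sub_one_div_eight {K : Type*} [DivisionRing K] (α : ℤ) :
    (-1 : K) ^ ((α ^ 2 - 1) / 8) = (-1) ^ (((α % 8) ^ 2 - 1) / 8) := by
  set s := α % 8
  set q := α / 8
  have hα : α ^ 2 - 1 = (s ^ 2 - 1) + 2 * (s * q + 4 * q ^ 2) * 8 := by
    rw [← Int.emod_add_mul_ediv α 8]
    ring
  rw [hα, Int.add_mul_ediv_right _ _ (by norm_num), zpow_add₀ (by norm_num),
    (even_two_mul _).neg_one_zpow, mul_one]

lemma Complex.exp_two_pi_I_div_eight : exp (2 * π * I / 8) = √2 / 2 * (1 + I) := by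
  rw [show 2 * π * I / 8 = ((π / 4 : ℝ) : ℂ) * I by push_cast; ring, exp_mul_I,
    ← ofReal_cos, ← ofReal_sin, Real.cos_pi_div_four, Real.sin_pi_div_four]
  push_cast
  ring

lemma Complex.one_add_exp_two_pi_I_mul_odd_div_eight_sq {α : ℤ} (hα : Odd α) :
    1 + exp (2 * π * I * α / 8) ^ 2
      = √2 * (-1) ^ ((α ^ 2 - 1) / 8) * exp (2 * π * I * α / 8) := by
  have hred : exp (2 * π * I * α / 8) = exp (2 * π * I / 8) ^ (α % 8) := by
    have hα8 : (α : ℂ) = ((α % 8 : ℤ) : ℂ) + 8 * ((α / 8 : ℤ) : ℂ) := by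
      exact_mod_cast (Int.emod_add_mul_ediv α 8).symm
    rw [← exp_int_mul, hα8, show 2 * π * I * (((α % 8 : ℤ) : ℂ) + 8 * ((α / 8 : ℤ) : ℂ)) / 8
      = (α % 8 : ℤ) * (2 * π * I / 8) + (α / 8 : ℤ) * (2 * π * I) by ring, exp_add,
      exp_int_mul_two_pi_mul_I, mul_one]
  have hs : α % 8 = 1 ∨ α % 8 = 3 ∨ α % 8 = 5 ∨ α % 8 = 7 := by
    have := Int.odd_iff.mp hα
    omega
  have hsqrt : (√2 : ℂ) ^ 2 = 2 := by rw [← ofReal_pow, Real.sq_sqrt zero_le_two]; norm_num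
  rw [hred, neg_one_zpow_sq_sub_one_div_eight, exp_two_pi_I_div_eight]
  rcases hs with hs | hs | hs | hs <;> rw [hs] <;> norm_num <;> grind [I_sq]

lemma quadGaussSum_exp_two_pi_I_mul_odd {α : ℤ} (hα : Odd α) {r : ℕ} (hr : 1 ≤ r) :
    quadGaussSum (exp (2 * π * I * α / 2 ^ (r + 1))) (2 ^ r)
      = (√2 * (-1) ^ ((α ^ 2 - 1) / 8)) ^ r * exp (2 * π * I * α / 8) := by
  set c : ℂ := √2 * (-1) ^ ((α ^ 2 - 1) / 8)
  have hc : c ^ 2 = 2 := by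
    rw [mul_pow, ← ofReal_pow, Real.sq_sqrt zero_le_two, ← zpow_natCast _ 2, ← zpow_mul,
      Nat.cast_ofNat, (even_two.mul_left _).neg_one_zpow]
    norm_num
  have hsq : exp (2 * π * I * α / 8) ^ 2 = exp (2 * π * I * α / 4) := by
    rw [← exp_nat_mul]
    ring_nf
  have hpow4 : exp (2 * π * I * α / 8) ^ 4 = -1 := by
    rw [← exp_two_pi_I_mul_odd_div_two hα, ← exp_nat_mul]
    ring_nf
  induction r using Nat.strong_induction_on with
  | _ r ih =>
  match r, hr with
  | 1, _ =>
    norm_num only [pow_one]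
    rw [quadGaussSum_two, ← hsq, one_add_exp_two_pi_I_mul_odd_div_eight_sq hα]
  | 2, _ =>
    norm_num only [hc]
    exact quadGaussSum_four hpow4
  | r + 3, _ =>
    have h4 : exp (2 * π * I * α / 2 ^ (r + 3 + 1)) ^ 4 = exp (2 * π * I * α / 2 ^ (r + 1 + 1)) :=
      exp_div_two_pow_pow _ (show 2 + (r + 2) = r + 3 + 1 by ring)
    have hneg : exp (2 * π * I * α / 2 ^ (r + 3 + 1)) ^ 2 ^ (r + 1 + 2) = -1 := by
      rw [exp_div_two_pow_pow _ (show r + 1 + 2 + 1 = r + 3 + 1 from rfl), pow_one,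
        exp_two_pi_I_mul_odd_div_two hα]
    rw [quadGaussSum_two_pow_add_two (by omega) hneg, h4, ih (r + 1) (by omega) (by omega),
      pow_add c _ 2, hc]
    ring

theorem stmt6 (α : ℤ) (hα : Odd α) (r : ℕ) (hr : 1 ≤ r) :
    (Real.sqrt (2 ^ r) : ℂ)⁻¹ *
        ∑ x ∈ Finset.range (2 ^ r),
          Complex.exp (2 * Real.pi * Complex.I * α * (x : ℂ) ^ 2 / 2 ^ (r + 1))
      = (-1 : ℂ) ^ ((r : ℤ) * ((α ^ 2 - 1) / 8)) *
          Complex.exp (2 * Real.pi * Complex.I * α / 8) := by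
  have hterm (x : ℕ) : exp (2 * π * I * α * (x : ℂ) ^ 2 / 2 ^ (r + 1))
      = exp (2 * π * I * α / 2 ^ (r + 1)) ^ x ^ 2 := by
    rw [← exp_nat_mul]
    push_cast
    ring_nf
  have hsqrt : (√(2 ^ r) : ℂ) ≠ 0 := ofReal_ne_zero.mpr (by positivity)
  simp only [hterm]
  rw [← quadGaussSum, quadGaussSum_exp_two_pi_I_mul_odd hα hr, mul_pow, ← mul_assoc, ← ofReal_pow,
    ← Real.sqrt_pow zero_le_two, inv_mul_cancel_left₀ hsqrt, ← zpow_natCast, ← zpow_mul,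
    mul_comm ((α ^ 2 - 1) / 8)]
end

section
/- Let p be an odd prime, r a positive integer, 0 ≤ s < r, and α an integer coprime to p. Then |ℤ/p^r ℤ|^{-1/2} ∑_{x mod p^r} e^{2πi p^s α x² ((p^r+1)/2) / p^r} = p^{s/2} · (ℤ/p^{r-s}ℤ)^{-1/2} ∑_{y mod p^{r-s}} e^{2πi α y² ((p^{r-s}+1)/2) / p^{r-s}}. That is, Θ(ℤ/p^rℤ, p^s q) = p^{s/2} Θ(ℤ/p^{r-s}ℤ, q̄) where q(x) = ((p^r+1)/2)α x²/p^r and q̄(y) = ((p^{r-s}+1)/2)α y²/p^{r-s}. -/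
/-!
Cancelling `p ^ s` turns the summand into `exp (2πi m α x² / p^(r-s))` with `m = (p^r + 1)/2`,
and `m ≡ (p^(r-s) + 1)/2 mod p^(r-s)` since both are inverses of `2` there. The summand is
then `p^(r-s)`-periodic in `x`, so the sum over `range (p^r)` is `p^s` copies of the sum over
`range (p^(r-s))`, and `√(p^r) = √(p^s) √(p^(r-s))` absorbs the factor `p^s`.
-/

open Finset Complex Real

theorem Function.Periodic.sum_range_mul {M : Type*} [AddCommMonoid M] {f : ℕ → M} {b : ℕ}
    (hf : Function.Periodic f b) (n : ℕ) :
    ∑ x ∈ range (n * b), f x = n • ∑ x ∈ range b, f x := by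
  induction n with
  | zero => simp
  | succ n ih =>
    rw [Nat.succ_mul, sum_range_add, ih, succ_nsmul]
    congr 1
    refine sum_congr rfl fun x _ => ?_
    rw [add_comm]
    simpa using hf.nat_mul n x

theorem exp_two_pi_I_mul_div_eq_of_modEq {a b : ℤ} {N : ℕ} (h : a ≡ b [ZMOD N]) :
    cexp (2 * π * I * a / N) = cexp (2 * π * I * b / N) := by
  rcases eq_or_ne N 0 with rfl | hN
  · rw [Int.natCast_zero, Int.modEq_zero_iff] at h
    rw [h]
  obtain ⟨k, hk⟩ := h.dvd
  have : 2 * π * I * b / N = 2 * π * I * a / N + k * (2 * π * I) := by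
    rw [eq_add_of_sub_eq' hk]
    push_cast
    field_simp
  rw [this, Complex.exp_add, exp_int_mul_two_pi_mul_I, mul_one]

theorem Nat.half_succ_modEq_of_dvd {N M : ℕ} (hN : Odd N) (hM : Odd M) (h : N ∣ M) :
    (M + 1) / 2 ≡ (N + 1) / 2 [MOD N] := by
  obtain ⟨k, rfl⟩ := h
  obtain ⟨j, rfl⟩ := (Nat.odd_mul.mp hM).2
  obtain ⟨i, rfl⟩ := hN
  have : ((2 * i + 1) * (2 * j + 1) + 1) / 2 = (2 * i + 1) * j + (2 * i + 1 + 1) / 2 := by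
    rw [show (2 * i + 1) * (2 * j + 1) + 1 = 2 * ((2 * i + 1) * j + (i + 1)) by ring]
    omega
  rw [this]
  exact (Nat.modEq_iff_dvd' (by omega)).mpr (by simp) |>.symm

theorem ofReal_sqrt_mul_inv_mul {a : ℝ} (ha : 0 ≤ a) (b : ℝ) (z : ℂ) :
    ((√(a * b) : ℝ) : ℂ)⁻¹ * (a * z) = (√a : ℂ) * (√b : ℂ)⁻¹ * z := by
  rcases ha.eq_or_lt with rfl | ha'
  · simp
  have hsa : (√a : ℂ) ≠ 0 := ofReal_ne_zero.mpr (Real.sqrt_pos.mpr ha').ne'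
  rw [Real.sqrt_mul ha, ← Real.mul_self_sqrt ha]
  push_cast
  rw [Real.mul_self_sqrt ha]
  field_simp

theorem stmt8_general (p : ℕ) (hodd : Odd p) (r s : ℕ) (hs : s < r)
    (α : ℤ) :
    (Real.sqrt (p ^ r) : ℂ)⁻¹ *
        ∑ x ∈ Finset.range (p ^ r),
          Complex.exp (2 * Real.pi * Complex.I *
            ((p : ℂ) ^ s * (((p ^ r + 1) / 2 : ℕ) : ℂ) * (α : ℂ) * (x : ℂ) ^ 2) / (p : ℂ) ^ r)
      = (Real.sqrt (p ^ s) : ℂ) * (Real.sqrt (p ^ (r - s)) : ℂ)⁻¹ *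
          ∑ y ∈ Finset.range (p ^ (r - s)),
            Complex.exp (2 * Real.pi * Complex.I *
              ((((p ^ (r - s) + 1) / 2 : ℕ) : ℂ) * (α : ℂ) * (y : ℂ) ^ 2) / (p : ℂ) ^ (r - s)) := by
  obtain ⟨t, rfl⟩ := Nat.exists_eq_add_of_le hs.le
  rw [Nat.add_sub_cancel_left]
  set m := (p ^ (s + t) + 1) / 2
  set m' := (p ^ t + 1) / 2
  set g : ℕ → ℂ := fun y => cexp (2 * π * I * (m' * α * (y : ℂ) ^ 2) / (p : ℂ) ^ t)
  have hp : (p : ℂ) ≠ 0 := Nat.cast_ne_zero.mpr hodd.pos.ne'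
  have hmm' : m ≡ m' [MOD p ^ t] :=
    Nat.half_succ_modEq_of_dvd hodd.pow hodd.pow (pow_dvd_pow p (Nat.le_add_left t s))
  have hterm (x : ℕ) : cexp (2 * π * I * ((p : ℂ) ^ s * m * α * (x : ℂ) ^ 2) / (p : ℂ) ^ (s + t))
      = g x := by
    have := exp_two_pi_I_mul_div_eq_of_modEq
      (((Int.natCast_modEq_iff.mpr hmm').mul_right α).mul_right ((x : ℤ) ^ 2))
    push_cast at this
    refine Eq.trans ?_ this
    rw [pow_add]
    congr 1
    field_simp
  have hper : Function.Periodic g (p ^ t) := fun x => by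
    have := exp_two_pi_I_mul_div_eq_of_modEq
      (((Int.add_modEq_right (n := (p ^ t : ℕ)) (a := (x : ℤ))).pow 2).mul_left (m' * α))
    simpa [g] using this
  rw [sum_congr rfl fun x _ => hterm x, pow_add p, pow_add (p : ℝ), hper.sum_range_mul,
    nsmul_eq_mul]
  have := ofReal_sqrt_mul_inv_mul (pow_nonneg (Nat.cast_nonneg p : (0 : ℝ) ≤ p) s)
    ((p : ℝ) ^ t) (∑ y ∈ range (p ^ t), g y)
  push_cast at this ⊢
  exact this

theorem stmt8 (p : ℕ) (hp : p.Prime) (hodd : Odd p) (r s : ℕ) (hs : s < r)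
    (α : ℤ) (hα : IsCoprime α (p : ℤ)) :
    (Real.sqrt (p ^ r) : ℂ)⁻¹ *
        ∑ x ∈ Finset.range (p ^ r),
          Complex.exp (2 * Real.pi * Complex.I *
            ((p : ℂ) ^ s * (((p ^ r + 1) / 2 : ℕ) : ℂ) * (α : ℂ) * (x : ℂ) ^ 2) / (p : ℂ) ^ r)
      = (Real.sqrt (p ^ s) : ℂ) * (Real.sqrt (p ^ (r - s)) : ℂ)⁻¹ *
          ∑ y ∈ Finset.range (p ^ (r - s)),
            Complex.exp (2 * Real.pi * Complex.I *
              ((((p ^ (r - s) + 1) / 2 : ℕ) : ℂ) * (α : ℂ) * (y : ℂ) ^ 2) / (p : ℂ) ^ (r - s)) :=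
  stmt8_general p hodd r s hs α
end

section
/- Let (G,q) be a finite abelian group with a quadratic form q such that ∂q is non-degenerate. For k ≥ 1, let F_k(G) = {(x₁,…,x_k) ∈ G^k : ∑ xᵢ = 0} with quadratic form F_k(q)(x₁,…,x_k) = ∑ q(xᵢ). Then the radical of ∂F_k(q) on F_k(G) equals {(x,x,…,x) : kx = 0}, and in particular is isomorphic to G[k] = {x ∈ G : kx = 0}. -/
/-!
With `b = ∂q`, the form `∂F_k(q)` pairs `x` and `y` to `∑ b(xᵢ, yᵢ)`. Testing `x` against the
zero-sum vector `z·eᵢ - z·eⱼ` gives `b(xᵢ - xⱼ, z) = 0` for every `z`, so `x` is constant by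
non-degeneracy. Conversely a constant vector `(a, …, a)` pairs with a zero-sum `y` to
`b(a, ∑ yᵢ) = 0`, and it lies in `F_k(G)` exactly when `k • a = 0`.
-/

open QuadraticMap

namespace AddMonoidHom

variable {ι M N P : Type*} [Fintype ι] [AddCommGroup M] [AddCommGroup N] [AddCommGroup P]

theorem sum_apply_pi_single [DecidableEq ι] (B : M →+ N →+ P) (x : ι → M) (i : ι) (z : N) :
    ∑ t, B (x t) ((Pi.single i z : ι → N) t) = B (x i) z := by
  rw [Fintype.sum_eq_single i fun t ht => by rw [Pi.single_eq_of_ne ht, map_zero],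
    Pi.single_eq_same]

theorem sum_apply_const_left_eq_zero (B : M →+ N →+ P) (a : M) {y : ι → N}
    (hy : ∑ i, y i = 0) : ∑ i, B a (y i) = 0 := by
  rw [← map_sum, hy, map_zero]

theorem eq_of_forall_sum_apply_eq_zero (B : M →+ N →+ P)
    (hB : ∀ m, (∀ n, B m n = 0) → m = 0) {x : ι → M}
    (hx : ∀ y : ι → N, ∑ i, y i = 0 → ∑ i, B (x i) (y i) = 0) (i j : ι) : x i = x j := by
  classical
  refine sub_eq_zero.mp (hB _ fun z => ?_)
  have hy : ∑ t, (Pi.single i z - Pi.single j z : ι → N) t = 0 := by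
    simp [Finset.sum_sub_distrib]
  simpa [Finset.sum_sub_distrib, sum_apply_pi_single] using hx _ hy

end AddMonoidHom

namespace QuadraticMap

variable {G N : Type*} [AddCommGroup G] [AddCommGroup N]

def polarAddMonoidHom (q : G → N)
    (hadd : ∀ x y z, polar q (x + z) y = polar q x y + polar q z y) : G →+ G →+ N :=
  AddMonoidHom.mk' (fun x => AddMonoidHom.mk' (polar q x) fun y z => by
      rw [polar_comm, hadd, polar_comm q y, polar_comm q z])
    fun x z => by ext y; exact hadd x y z

theorem polar_sum_pi {ι : Type*} [Fintype ι] (q : G → N) (x y : ι → G) :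
    polar (fun x : ι → G => ∑ i, q (x i)) x y = ∑ i, polar q (x i) (y i) := by
  simp only [polar, Pi.add_apply, Finset.sum_sub_distrib]

end QuadraticMap

theorem stmt10_general {G : Type*} [AddCommGroup G]
    (q : G → AddCircle (1 : ℚ))
    (hq_bilin : ∀ x y z : G,
      q (x + z + y) - q (x + z) - q y
        = (q (x + y) - q x - q y) + (q (z + y) - q z - q y))
    (hnd : ∀ x : G, (∀ y : G, q (x + y) - q x - q y = 0) → x = 0)
    (k : ℕ) (hk : 1 ≤ k) (x : Fin k → G) (hx : ∑ i, x i = 0) :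
    (∀ y : Fin k → G, (∑ i, y i = 0) →
        (∑ i, q (x i + y i)) - (∑ i, q (x i)) - (∑ i, q (y i)) = 0)
      ↔ ∃ a : G, k • a = 0 ∧ x = fun _ => a := by
  let B := polarAddMonoidHom q hq_bilin
  have hpolar : ∀ y : Fin k → G, (∑ i, q (x i + y i)) - (∑ i, q (x i)) - (∑ i, q (y i))
      = ∑ i, B (x i) (y i) := polar_sum_pi q x
  simp only [hpolar]
  constructor
  · intro h
    have hconst : x = fun _ => x ⟨0, hk⟩ :=
      funext fun i => B.eq_of_forall_sum_apply_eq_zero hnd h i ⟨0, hk⟩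
    refine ⟨x ⟨0, hk⟩, ?_, hconst⟩
    rw [hconst] at hx
    simpa using hx
  · rintro ⟨a, -, rfl⟩ y hy
    exact B.sum_apply_const_left_eq_zero a hy

theorem stmt10 {G : Type*} [AddCommGroup G] [Fintype G]
    (q : G → AddCircle (1 : ℚ))
    (hq_even : ∀ x : G, q (-x) = q x)
    (hq_bilin : ∀ x y z : G,
      q (x + z + y) - q (x + z) - q y
        = (q (x + y) - q x - q y) + (q (z + y) - q z - q y))
    (hnd : ∀ x : G, (∀ y : G, q (x + y) - q x - q y = 0) → x = 0)
    (k : ℕ) (hk : 1 ≤ k) (x : Fin k → G) (hx : ∑ i, x i = 0) :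
    (∀ y : Fin k → G, (∑ i, y i = 0) →
        (∑ i, q (x i + y i)) - (∑ i, q (x i)) - (∑ i, q (y i)) = 0)
      ↔ ∃ a : G, k • a = 0 ∧ x = fun _ => a :=
  stmt10_general q hq_bilin hnd k hk x hx
end

section
/- Let (G,q) be a finite abelian group with quadratic form q, and let T_k be the (k-1)×(k-1) symmetric integer matrix with all diagonal entries 2 and all off-diagonal entries 1. Define the quadratic form (T_k ⊗ q) on G^{k-1} by (T_k ⊗ q)(x₁,…,x_{k-1}) = ∑ᵢ (T_k)_{ii} q(xᵢ) + ∑_{i<j} (T_k)_{ij} ∂q(xᵢ,xⱼ). Then the map φ(x₁,…,x_{k-1}) = (x₁,…,x_{k-1}, -∑ᵢ xᵢ) is an isometry from (G^{k-1}, T_k ⊗ q) onto (F_k(G), F_k(q)), where F_k(G) = {(x₁,…,x_k) ∈ G^k : ∑xᵢ = 0} and F_k(q)(x₁,…,x_k) = ∑ q(xᵢ). -/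
open Classical

theorem stmt11 {G : Type*} [AddCommGroup G] [Fintype G]
    (q : G → AddCircle (1 : ℚ))
    (hq_even : ∀ x : G, q (-x) = q x)
    (hq_bilin : ∀ x y z : G,
      q (x + z + y) - q (x + z) - q y
        = (q (x + y) - q x - q y) + (q (z + y) - q z - q y))
    (n : ℕ)
    -- `φ` appends the element `-(x₁ + ⋯ + x_{k-1})`, where `k = n + 1`:
    (φ : (Fin n → G) → (Fin (n + 1) → G))
    (hφ : ∀ x : Fin n → G, φ x = Fin.snoc x (-∑ i, x i)) :
    -- `φ` is additive and injective,
    (∀ x y : Fin n → G, φ (x + y) = φ x + φ y) ∧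
    Function.Injective φ ∧
    -- its image is exactly `F_k(G) = {y : ∑ yᵢ = 0}`,
    (∀ x : Fin n → G, ∑ i, φ x i = 0) ∧
    (∀ y : Fin (n + 1) → G, (∑ i, y i = 0) → ∃ x : Fin n → G, φ x = y) ∧
    -- and it takes `T_k ⊗ q` to `F_k(q)`:
    (∀ x : Fin n → G,
      (∑ i, q (φ x i)) =
        (∑ i, (2 : ℤ) • q (x i)) +
          ∑ i : Fin n, ∑ j : Fin n,
            if i < j then q (x i + x j) - q (x i) - q (x j) else 0) := by
  set B : G → G → AddCircle (1 : ℚ) := fun x y => q (x + y) - q x - q y with hBdef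
  have hBadd : ∀ x z y : G, B (x + z) y = B x y + B z y := fun x z y => hq_bilin x y z
  have hB0 : ∀ y : G, B 0 y = 0 := by
    intro y
    have h : B 0 y = B 0 y + B 0 y := by
      conv_lhs => rw [show (0 : G) = 0 + 0 by simp, hBadd]
    exact left_eq_add.mp h
  have hq0 : q 0 = 0 := by
    have := hB0 0
    simp only [hBdef, add_zero] at this
    -- this : q 0 - q 0 - q 0 = 0
    have h2 : -q 0 = 0 := by rw [← this]; abel
    simpa using h2
  have hBsum : ∀ (m : ℕ) (f : Fin m → G) (a : G),
      B (∑ i, f i) a = ∑ i, B (f i) a := by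
    intro m
    induction m with
    | zero => intro f a; simp [hB0]
    | succ m ih =>
      intro f a
      rw [Fin.sum_univ_castSucc, Fin.sum_univ_castSucc, hBadd, ih]
  have key : ∀ (m : ℕ) (f : Fin m → G),
      q (∑ i, f i) = ∑ i, q (f i) +
        ∑ i : Fin m, ∑ j : Fin m, if i < j then B (f i) (f j) else 0 := by
    intro m
    induction m with
    | zero => intro f; simp [hq0]
    | succ m ih =>
      intro f
      rw [Fin.sum_univ_castSucc]
      have hexp : q (∑ i : Fin m, f i.castSucc + f (Fin.last m))
          = q (∑ i : Fin m, f i.castSucc) + q (f (Fin.last m))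
            + B (∑ i : Fin m, f i.castSucc) (f (Fin.last m)) := by
        simp only [hBdef]; abel
      rw [hexp, ih (fun i => f i.castSucc), hBsum]
      have hcross :
          (∑ i : Fin (m+1), ∑ j : Fin (m+1), if i < j then B (f i) (f j) else 0)
          = (∑ i : Fin m, ∑ j : Fin m,
              if i < j then B (f i.castSucc) (f j.castSucc) else 0)
            + ∑ i : Fin m, B (f i.castSucc) (f (Fin.last m)) := by
        rw [Fin.sum_univ_castSucc]
        have hlast : (∑ j : Fin (m+1), if Fin.last m < j then B (f (Fin.last m)) (f j) else 0) = 0 := by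
          apply Finset.sum_eq_zero
          intro j _
          rw [if_neg]
          exact fun h => absurd h (not_lt.mpr (Fin.le_last j))
        rw [hlast, add_zero]
        rw [← Finset.sum_add_distrib]
        apply Finset.sum_congr rfl
        intro i _
        rw [Fin.sum_univ_castSucc, if_pos (Fin.castSucc_lt_last i)]
        simp [Fin.castSucc_lt_castSucc_iff]
      rw [hcross, Fin.sum_univ_castSucc]
      abel
  refine ⟨?_, ?_, ?_, ?_, ?_⟩
  · intro x y
    funext i
    refine Fin.lastCases ?_ ?_ i
    · simp [hφ, Finset.sum_add_distrib, neg_add, add_comm]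
    · intro j; simp [hφ]
  · intro x y h
    funext i
    have := congrFun h i.castSucc
    simpa [hφ] using this
  · intro x
    rw [Fin.sum_univ_castSucc]
    simp [hφ]
  · intro y hy
    refine ⟨fun i => y i.castSucc, ?_⟩
    funext i
    refine Fin.lastCases ?_ ?_ i
    · rw [Fin.sum_univ_castSucc] at hy
      simp only [hφ, Fin.snoc_last]
      rw [eq_comm, eq_neg_iff_add_eq_zero, add_comm]
      exact hy
    · intro j; simp [hφ]
  · intro x
    rw [Fin.sum_univ_castSucc]
    simp only [hφ, Fin.snoc_last, Fin.snoc_castSucc, hq_even]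
    rw [key n x]
    have h2 : ∀ i : Fin n, (2 : ℤ) • q (x i) = q (x i) + q (x i) := fun i => two_zsmul _
    simp only [h2, Finset.sum_add_distrib, hBdef]
    abel
end

section
/- Let A, B, C be odd integers and n ≥ 1. Then there exists a 2×2 integer matrix S = (s_{ij}) with S ≡ I mod 2 such that s₁₁² + s₁₁s₁₂ + s₁₂² ≡ A, 2s₁₁s₂₁ + s₁₁s₂₂ + s₂₁s₁₂ + 2s₁₂s₂₂ ≡ B, and s₂₁² + s₂₁s₂₂ + s₂₂² ≡ C, all modulo 2^n. (Equivalently, the quadratic form x₁² + x₁x₂ + x₂² transforms into Ax₁² + Bx₁x₂ + Cx₂² modulo 2^n under the substitution (x₁,x₂) ↦ (x₁,x₂)S.) -/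
/-!
Hensel lifting. Write `Q(x, y) = x² + xy + y²` and `P` for its polar form. If `S ≡ I [mod 2]`
solves the three congruences modulo an even `t`, with errors `t eA`, `t eB`, `t eC`, replace the
rows `r₁, r₂` of `S` by `r₁ + t (eB, eA)` and `r₂ + t (eC, 0)`. Modulo `2t` the quadratic terms
vanish, and since `P((x₁, y₁), (x₂, y₂)) ≡ x₁ y₂ + x₂ y₁ [mod 2]` and the rows are `≡ (1, 0), (0, 1)`,
the first order terms are exactly `t eA`, `t eB`, `t eC`. Modulo `2` the identity matrix works.
-/

namespace EisensteinForm

def form (x y : ℤ) : ℤ := x ^ 2 + x * y + y ^ 2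

def polar (x₁ y₁ x₂ y₂ : ℤ) : ℤ := 2 * x₁ * x₂ + x₁ * y₂ + x₂ * y₁ + 2 * y₁ * y₂

def TransformsMod (m A B C s₁₁ s₁₂ s₂₁ s₂₂ : ℤ) : Prop :=
  s₁₁ ≡ 1 [ZMOD 2] ∧ s₁₂ ≡ 0 [ZMOD 2] ∧ s₂₁ ≡ 0 [ZMOD 2] ∧ s₂₂ ≡ 1 [ZMOD 2] ∧
    form s₁₁ s₁₂ ≡ A [ZMOD m] ∧ polar s₁₁ s₁₂ s₂₁ s₂₂ ≡ B [ZMOD m] ∧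
    form s₂₁ s₂₂ ≡ C [ZMOD m]

theorem form_add_mul (x y u v t : ℤ) :
    form (x + t * u) (y + t * v) = form x y + t * polar x y u v + t ^ 2 * form u v := by
  unfold form polar; ring

theorem polar_add_mul (x₁ y₁ x₂ y₂ u₁ v₁ u₂ v₂ t : ℤ) :
    polar (x₁ + t * u₁) (y₁ + t * v₁) (x₂ + t * u₂) (y₂ + t * v₂) =
      polar x₁ y₁ x₂ y₂ + t * (polar u₁ v₁ x₂ y₂ + polar x₁ y₁ u₂ v₂) +
        t ^ 2 * polar u₁ v₁ u₂ v₂ := by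
  unfold polar; ring

theorem polar_modEq_two (x₁ y₁ x₂ y₂ : ℤ) : polar x₁ y₁ x₂ y₂ ≡ x₁ * y₂ + x₂ * y₁ [ZMOD 2] :=
  Int.modEq_iff_dvd.mpr ⟨-(x₁ * x₂) - y₁ * y₂, by unfold polar; ring⟩

theorem add_mul_modEq_two {t : ℤ} (ht : 2 ∣ t) (s u : ℤ) : s + t * u ≡ s [ZMOD 2] :=
  Int.modEq_iff_dvd.mpr (by simpa using (dvd_mul_of_dvd_left ht u).neg_right)

theorem add_mul_add_sq_mul_modEq {t q d e r a : ℤ} (ht : 2 ∣ t) (hd : d ≡ e [ZMOD 2])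
    (ha : a = q + t * e) : q + t * d + t ^ 2 * r ≡ a [ZMOD 2 * t] := by
  have hsq : t ^ 2 * r ≡ 0 [ZMOD 2 * t] :=
    Int.modEq_zero_iff_dvd.mpr (dvd_mul_of_dvd_left (sq t ▸ mul_dvd_mul_right ht t) r)
  have hlin : t * d ≡ t * e [ZMOD 2 * t] := mul_comm t 2 ▸ hd.mul_left' (c := t)
  simpa [ha] using (Int.ModEq.refl q).add hlin |>.add hsq

theorem transformsMod_two {A B C : ℤ} (hA : Odd A) (hB : Odd B) (hC : Odd C) :
    TransformsMod 2 A B C 1 0 0 1 := by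
  have hodd {X : ℤ} (hX : Odd X) : 1 ≡ X [ZMOD 2] := (Int.odd_iff.mp hX).symm
  exact ⟨rfl, rfl, rfl, rfl, hodd hA, hodd hB, hodd hC⟩

theorem TransformsMod.lift {t A B C s₁₁ s₁₂ s₂₁ s₂₂ : ℤ} (ht : 2 ∣ t)
    (h : TransformsMod t A B C s₁₁ s₁₂ s₂₁ s₂₂) :
    ∃ s₁₁' s₁₂' s₂₁' s₂₂', TransformsMod (2 * t) A B C s₁₁' s₁₂' s₂₁' s₂₂' := by
  obtain ⟨h₁₁, h₁₂, h₂₁, h₂₂, hA, hB, hC⟩ := h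
  obtain ⟨eA, heA⟩ := hA.dvd
  obtain ⟨eB, heB⟩ := hB.dvd
  obtain ⟨eC, heC⟩ := hC.dvd
  refine ⟨s₁₁ + t * eB, s₁₂ + t * eA, s₂₁ + t * eC, s₂₂ + t * 0,
    (add_mul_modEq_two ht _ _).trans h₁₁, (add_mul_modEq_two ht _ _).trans h₁₂,
    (add_mul_modEq_two ht _ _).trans h₂₁, (add_mul_modEq_two ht _ _).trans h₂₂, ?_, ?_, ?_⟩
  · rw [form_add_mul]
    refine add_mul_add_sq_mul_modEq ht (e := eA) ?_ (by linarith)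
    calc polar s₁₁ s₁₂ eB eA ≡ s₁₁ * eA + eB * s₁₂ [ZMOD 2] := polar_modEq_two ..
      _ ≡ 1 * eA + eB * 0 [ZMOD 2] := by gcongr
      _ = eA := by ring
  · rw [polar_add_mul]
    refine add_mul_add_sq_mul_modEq ht (e := eB) ?_ (by linarith)
    calc polar eB eA s₂₁ s₂₂ + polar s₁₁ s₁₂ eC 0
        ≡ (eB * s₂₂ + s₂₁ * eA) + (s₁₁ * 0 + eC * s₁₂) [ZMOD 2] := by
          gcongr <;> exact polar_modEq_two ..
      _ ≡ (eB * 1 + 0 * eA) + (s₁₁ * 0 + eC * 0) [ZMOD 2] := by gcongr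
      _ = eB := by ring
  · rw [form_add_mul]
    refine add_mul_add_sq_mul_modEq ht (e := eC) ?_ (by linarith)
    calc polar s₂₁ s₂₂ eC 0 ≡ s₂₁ * 0 + eC * s₂₂ [ZMOD 2] := polar_modEq_two ..
      _ ≡ 0 * 0 + eC * 1 [ZMOD 2] := by gcongr
      _ = eC := by ring

theorem TransformsMod.of_dvd {m m' A B C s₁₁ s₁₂ s₂₁ s₂₂ : ℤ} (hm : m' ∣ m)
    (h : TransformsMod m A B C s₁₁ s₁₂ s₂₁ s₂₂) : TransformsMod m' A B C s₁₁ s₁₂ s₂₁ s₂₂ :=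
  let ⟨h₁₁, h₁₂, h₂₁, h₂₂, hA, hB, hC⟩ := h
  ⟨h₁₁, h₁₂, h₂₁, h₂₂, hA.of_dvd hm, hB.of_dvd hm, hC.of_dvd hm⟩

theorem exists_transformsMod_two_pow_succ {A B C : ℤ} (hA : Odd A) (hB : Odd B) (hC : Odd C)
    (n : ℕ) : ∃ s₁₁ s₁₂ s₂₁ s₂₂, TransformsMod (2 ^ (n + 1)) A B C s₁₁ s₁₂ s₂₁ s₂₂ := by
  induction n with
  | zero => exact ⟨1, 0, 0, 1, transformsMod_two hA hB hC⟩
  | succ n ih =>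
    obtain ⟨s₁₁, s₁₂, s₂₁, s₂₂, h⟩ := ih
    rw [pow_succ']
    exact h.lift (dvd_pow_self 2 n.succ_ne_zero)

end EisensteinForm

open EisensteinForm in
theorem stmt17_general (A B C : ℤ) (hA : Odd A) (hB : Odd B) (hC : Odd C) (n : ℕ) :
    ∃ s₁₁ s₁₂ s₂₁ s₂₂ : ℤ,
      s₁₁ ≡ 1 [ZMOD 2] ∧ s₁₂ ≡ 0 [ZMOD 2] ∧ s₂₁ ≡ 0 [ZMOD 2] ∧ s₂₂ ≡ 1 [ZMOD 2] ∧
      s₁₁ ^ 2 + s₁₁ * s₁₂ + s₁₂ ^ 2 ≡ A [ZMOD 2 ^ n] ∧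
      2 * s₁₁ * s₂₁ + s₁₁ * s₂₂ + s₂₁ * s₁₂ + 2 * s₁₂ * s₂₂ ≡ B [ZMOD 2 ^ n] ∧
      s₂₁ ^ 2 + s₂₁ * s₂₂ + s₂₂ ^ 2 ≡ C [ZMOD 2 ^ n] := by
  obtain ⟨s₁₁, s₁₂, s₂₁, s₂₂, h⟩ := exists_transformsMod_two_pow_succ hA hB hC n
  exact ⟨s₁₁, s₁₂, s₂₁, s₂₂, h.of_dvd (pow_dvd_pow 2 n.le_succ)⟩

theorem stmt17 (A B C : ℤ) (hA : Odd A) (hB : Odd B) (hC : Odd C) (n : ℕ) (hn : 1 ≤ n) :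
    ∃ s₁₁ s₁₂ s₂₁ s₂₂ : ℤ,
      s₁₁ ≡ 1 [ZMOD 2] ∧ s₁₂ ≡ 0 [ZMOD 2] ∧ s₂₁ ≡ 0 [ZMOD 2] ∧ s₂₂ ≡ 1 [ZMOD 2] ∧
      s₁₁ ^ 2 + s₁₁ * s₁₂ + s₁₂ ^ 2 ≡ A [ZMOD 2 ^ n] ∧
      2 * s₁₁ * s₂₁ + s₁₁ * s₂₂ + s₂₁ * s₁₂ + 2 * s₁₂ * s₂₂ ≡ B [ZMOD 2 ^ n] ∧
      s₂₁ ^ 2 + s₂₁ * s₂₂ + s₂₂ ^ 2 ≡ C [ZMOD 2 ^ n] :=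
  stmt17_general A B C hA hB hC n
end

section
/- Let A, B, C be integers with B odd and A·C even, and let n ≥ 1. Then there exists a 2×2 integer matrix S = (s_{ij}) with S ≡ [[A,1],[1,C]] mod 2 such that s₁₁s₁₂ ≡ A, s₁₁s₂₂ + s₂₁s₁₂ ≡ B, and s₂₁s₂₂ ≡ C, all modulo 2^n. -/
/-!
Take `S = [[A u, x], [1, C]]`, where `x` is an odd root of `q(X) = X² - B X + A C` modulo `2ⁿ` and
`u` is an odd inverse of `x` modulo `2ⁿ`. Such a root exists because `q(x)` is even for odd `x` and
`q(x + q(x)) = q(x) (2x + 1 - B + q(x))` with an even second factor, so the step `x ↦ x + q(x)`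
turns a root modulo `2ⁿ` into a root modulo `2ⁿ⁺¹`.
-/

namespace OddQuadratic

variable {b c : ℤ}

lemma even_eval_of_odd (hb : Odd b) (hc : Even c) {x : ℤ} (hx : Odd x) :
    Even (x ^ 2 - b * x + c) := by
  have : x ^ 2 - b * x + c = x * (x - b) + c := by ring
  rw [this]
  exact ((hx.sub_odd hb).mul_left x).add hc

lemma eval_add_eval (x : ℤ) :
    let q := x ^ 2 - b * x + c
    (x + q) ^ 2 - b * (x + q) + c = q * (2 * x + (1 - b) + q) := by
  ring

lemma exists_odd_root_mod_two_pow (hb : Odd b) (hc : Even c) (n : ℕ) :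
    ∃ x : ℤ, Odd x ∧ 2 ^ n ∣ x ^ 2 - b * x + c := by
  induction n with
  | zero => exact ⟨1, odd_one, one_dvd _⟩
  | succ n ih =>
    obtain ⟨x, hx, hdvd⟩ := ih
    have hq := even_eval_of_odd hb hc hx
    have hfactor : Even (2 * x + (1 - b) + (x ^ 2 - b * x + c)) :=
      ((even_two_mul x).add (odd_one.sub_odd hb)).add hq
    refine ⟨x + (x ^ 2 - b * x + c), hx.add_even hq, ?_⟩
    rw [eval_add_eval, pow_succ]
    exact mul_dvd_mul hdvd (even_iff_two_dvd.mp hfactor)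

end OddQuadratic

lemma Int.exists_odd_mul_modEq_one_of_odd {x : ℤ} (hx : Odd x) (n : ℕ) :
    ∃ u : ℤ, Odd u ∧ x * u ≡ 1 [ZMOD 2 ^ n] := by
  obtain ⟨a, rfl⟩ := hx
  have hcop : IsCoprime (2 * a + 1) (2 ^ (n + 1)) :=
    IsCoprime.pow_right ⟨1, -a, by ring⟩
  obtain ⟨u, v, huv⟩ := hcop
  have hinv : (2 * a + 1) * u ≡ 1 [ZMOD 2 ^ (n + 1)] :=
    Int.modEq_iff_dvd.mpr ⟨v, by linear_combination -huv⟩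
  refine ⟨u, ?_, hinv.of_dvd (pow_dvd_pow 2 n.le_succ)⟩
  have hodd : Odd ((2 * a + 1) * u) := by
    rw [Int.odd_iff]
    exact hinv.of_dvd (dvd_pow_self 2 n.succ_ne_zero)
  exact (Int.odd_mul.mp hodd).2

theorem stmt18_general (A B C : ℤ) (hB : Odd B) (hAC : Even (A * C)) (n : ℕ) :
    ∃ s₁₁ s₁₂ s₂₁ s₂₂ : ℤ,
      s₁₁ ≡ A [ZMOD 2] ∧ s₁₂ ≡ 1 [ZMOD 2] ∧ s₂₁ ≡ 1 [ZMOD 2] ∧ s₂₂ ≡ C [ZMOD 2] ∧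
      s₁₁ * s₁₂ ≡ A [ZMOD 2 ^ n] ∧
      s₁₁ * s₂₂ + s₂₁ * s₁₂ ≡ B [ZMOD 2 ^ n] ∧
      s₂₁ * s₂₂ ≡ C [ZMOD 2 ^ n] := by
  obtain ⟨x, hx, hroot⟩ := OddQuadratic.exists_odd_root_mod_two_pow hB hAC n
  obtain ⟨u, hu, hinv⟩ := Int.exists_odd_mul_modEq_one_of_odd hx n
  have hinv_dvd : 2 ^ n ∣ x * u - 1 := hinv.symm.dvd
  refine ⟨A * u, x, 1, C, ?_, Int.odd_iff.mp hx, rfl, rfl, ?_, ?_, by rw [one_mul]⟩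
  · simpa using (show u ≡ 1 [ZMOD 2] from Int.odd_iff.mp hu).mul_left A
  · simpa [mul_assoc, mul_comm u x] using hinv.mul_left A
  · refine (Int.modEq_iff_dvd.mpr ?_).symm
    have hsplit : A * u * C + 1 * x - B = u * (x ^ 2 - B * x + A * C) + (B - x) * (x * u - 1) := by
      ring
    exact hsplit ▸ hroot.linear_comb hinv_dvd u (B - x)

theorem stmt18 (A B C : ℤ) (hB : Odd B) (hAC : Even (A * C)) (n : ℕ) (hn : 1 ≤ n) :
    ∃ s₁₁ s₁₂ s₂₁ s₂₂ : ℤ,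
      s₁₁ ≡ A [ZMOD 2] ∧ s₁₂ ≡ 1 [ZMOD 2] ∧ s₂₁ ≡ 1 [ZMOD 2] ∧ s₂₂ ≡ C [ZMOD 2] ∧
      s₁₁ * s₁₂ ≡ A [ZMOD 2 ^ n] ∧
      s₁₁ * s₂₂ + s₂₁ * s₁₂ ≡ B [ZMOD 2 ^ n] ∧
      s₂₁ * s₂₂ ≡ C [ZMOD 2 ^ n] :=
  stmt18_general A B C hB hAC n
end

section
/- Let G be a finite abelian group of exponent e, and write G = ⊕ₖ ⟨eₖ⟩ as a direct sum of cyclic groups generated by e₁,…,e_n. Let f₁,…,f_n ∈ G with order(fₖ) = order(eₖ) for all k, such that f₁,…,f_n generate G. Then there exists an automorphism φ of G with φ(eₖ) = fₖ for all k; in particular, G = ⊕ₖ ⟨fₖ⟩. -/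
/-!
The decomposition `G = ⨁ ⟨eᵢ⟩` gives `|⨁ ⟨fᵢ⟩| = |⨁ ⟨eᵢ⟩| = |G|`, because cyclic groups of equal
order are isomorphic. The sum map `⨁ ⟨fᵢ⟩ → G` is onto since the `fᵢ` generate `G`, so by counting
it is bijective: `G = ⨁ ⟨fᵢ⟩`. Matching the two decompositions summand by summand via `eᵢ ↦ fᵢ`
yields the automorphism.
-/

namespace AddSubgroup

variable {G : Type*} [AddGroup G]

theorem mem_zmultiples_mk_self (a : G) (x : zmultiples a) :
    x ∈ zmultiples (⟨a, mem_zmultiples a⟩ : zmultiples a) := by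
  obtain ⟨_, k, rfl⟩ := x
  exact ⟨k, rfl⟩

noncomputable def zmultiplesAddEquivOfAddOrderOfEq {a b : G} (h : addOrderOf a = addOrderOf b) :
    zmultiples a ≃+ zmultiples b :=
  addEquivOfAddOrderOfEq (mem_zmultiples_mk_self a) (mem_zmultiples_mk_self b)
    (by simpa only [addOrderOf_mk] using h)

theorem zmultiplesAddEquivOfAddOrderOfEq_apply_self {a b : G} (h : addOrderOf a = addOrderOf b) :
    zmultiplesAddEquivOfAddOrderOfEq h ⟨a, mem_zmultiples a⟩ = ⟨b, mem_zmultiples b⟩ :=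
  addEquivOfAddOrderOfEq_apply_gen _ _ _

end AddSubgroup

namespace DirectSum

variable {ι : Type*} [DecidableEq ι] {G H : Type*} [AddCommGroup G] [AddCommGroup H]

theorem coeAddMonoidHom_surjective_of_closure_eq_top {B : ι → AddSubgroup G} {g : ι → G}
    (hg : ∀ i, g i ∈ B i) (hclosure : AddSubgroup.closure (Set.range g) = ⊤) :
    Function.Surjective (DirectSum.coeAddMonoidHom B) := by
  rw [← AddMonoidHom.range_eq_top, eq_top_iff, ← hclosure, AddSubgroup.closure_le]
  rintro _ ⟨i, rfl⟩
  exact ⟨of (fun i => B i) i ⟨g i, hg i⟩, coeAddMonoidHom_of B i _⟩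

theorem IsInternal.of_addEquiv_of_surjective [Finite G] {A B : ι → AddSubgroup G}
    (hA : IsInternal A) (u : ∀ i, A i ≃+ B i)
    (hB : Function.Surjective (DirectSum.coeAddMonoidHom B)) : IsInternal B := by
  let eB : (⨁ i, B i) ≃+ G := (congrAddEquiv u).symm.trans (AddEquiv.ofBijective _ hA)
  have : Finite (⨁ i, B i) := .of_equiv G eB.toEquiv.symm
  exact hB.bijective_of_nat_card_le (Nat.card_congr eB.toEquiv).le

variable {A : ι → AddSubgroup G} {B : ι → AddSubgroup H}

noncomputable def IsInternal.addEquivOfAddEquiv (hA : IsInternal A) (hB : IsInternal B)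
    (u : ∀ i, A i ≃+ B i) : G ≃+ H :=
  (AddEquiv.ofBijective _ hA).symm.trans ((congrAddEquiv u).trans (AddEquiv.ofBijective _ hB))

theorem IsInternal.addEquivOfAddEquiv_apply_coe (hA : IsInternal A) (hB : IsInternal B)
    (u : ∀ i, A i ≃+ B i) (i : ι) (x : A i) :
    hA.addEquivOfAddEquiv hB u x = u i x := by
  have hx : (AddEquiv.ofBijective _ hA).symm (x : G) = of (fun i => A i) i x := by
    rw [AddEquiv.symm_apply_eq]; exact (coeAddMonoidHom_of A i x).symm
  simp only [addEquivOfAddEquiv, AddEquiv.trans_apply, hx]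
  show DirectSum.coeAddMonoidHom B (map (fun i => (u i).toAddMonoidHom) (of _ i x)) = _
  rw [map_of, coeAddMonoidHom_of]
  rfl

end DirectSum

theorem stmt19 {G : Type*} [AddCommGroup G] [Fintype G] (n : ℕ)
    (e f : Fin n → G)
    (hdecomp : DirectSum.IsInternal (fun i : Fin n => AddSubgroup.zmultiples (e i)))
    (horder : ∀ i, addOrderOf (f i) = addOrderOf (e i))
    (hgen : AddSubgroup.closure (Set.range f) = ⊤) :
    (∃ φ : G ≃+ G, ∀ i, φ (e i) = f i) ∧
    DirectSum.IsInternal (fun i : Fin n => AddSubgroup.zmultiples (f i)) := by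
  let u i := AddSubgroup.zmultiplesAddEquivOfAddOrderOfEq (horder i).symm
  have hdecomp' : DirectSum.IsInternal (fun i => AddSubgroup.zmultiples (f i)) :=
    hdecomp.of_addEquiv_of_surjective u
      (DirectSum.coeAddMonoidHom_surjective_of_closure_eq_top
        (fun i => AddSubgroup.mem_zmultiples (f i)) hgen)
  refine ⟨⟨hdecomp.addEquivOfAddEquiv hdecomp' u, fun i => ?_⟩, hdecomp'⟩
  rw [← AddSubgroup.coe_mk _ (e i) (AddSubgroup.mem_zmultiples _),
    hdecomp.addEquivOfAddEquiv_apply_coe, AddSubgroup.zmultiplesAddEquivOfAddOrderOfEq_apply_self]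
end
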